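/- arXiv:1503.08310 — 3 statements merged into one kernel-verified Lean document; each statement's English description precedes it below -/
import Mathlib

section
/- Let a, b ≥ 0 and 1 ≤ m < k and r ≤ ⌈k/m⌉ be integers, and consider the r-majority bootstrap percolation process on L(n,k) (with 2k+1 ≤ n). Suppose that at some state of the process every vertex of S^k_m(a,b) is active and every vertex of S^k_m(a+1,b) is m-good or active. Then, deterministically, every vertex of S^k_m(a+1,b) eventually becomes active. -/
open Finset Filter

namespace Maj

variable {V : Type*}

/-- The set of neighbours of `v` under the adjacency relation `Adj`. -/
def nbrSet (Adj : V → V → Prop) (v : V) : Set V := {u | Adj v u}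

/-- One round of the `r`-majority bootstrap percolation process: an inactive vertex `v`
becomes active if at least `⌈(deg v + r)/2⌉` of its neighbours are active, i.e. if
`deg v + r ≤ 2 * #(active neighbours)`. -/
def majStep (Adj : V → V → Prop) (r : ℤ) (A : Set V) : Set V :=
  A ∪ {v | ((nbrSet Adj v).ncard : ℤ) + r ≤ 2 * ((nbrSet Adj v ∩ A).ncard : ℤ)}

/-- The final (stationary) state of `r`-majority bootstrap percolation started from `A`. -/
def majFinal (Adj : V → V → Prop) (r : ℤ) (A : Set V) : Set V :=
  ⋃ s : ℕ, (majStep Adj r)^[s] A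

/-- One round of ordinary bootstrap percolation with activation threshold `j`. -/
def bootStep (Adj : V → V → Prop) (j : ℕ) (A : Set V) : Set V :=
  A ∪ {v | j ≤ (nbrSet Adj v ∩ A).ncard}

/-- The final state of ordinary bootstrap percolation `B_j(G;A)`. -/
def bootFinal (Adj : V → V → Prop) (j : ℕ) (A : Set V) : Set V :=
  ⋃ s : ℕ, (bootStep Adj j)^[s] A

/-- The vertex set of the `j`-core of the subgraph induced on `U`: the largest `W ⊆ U`
such that every vertex of `W` has at least `j` neighbours in `W`. -/
def coreSet (Adj : V → V → Prop) (j : ℤ) (U : Set V) : Set V :=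
  ⋃₀ {W : Set V | W ⊆ U ∧ ∀ v ∈ W, j ≤ ((nbrSet Adj v ∩ W).ncard : ℤ)}

open scoped Classical in
/-- The probability that the random initial set (each vertex initially active with
probability `p`, independently) satisfies the event `E`. -/
noncomputable def initProb (V : Type*) [Fintype V] (p : ℝ) (E : Set V → Prop) : ℝ :=
  ∑ A : Finset V, if E ↑A then p ^ A.card * (1 - p) ^ (Fintype.card V - A.card) else 0

/-- The toroidal grid `[n]²`. -/
abbrev Torus (n : ℕ) := ZMod n × ZMod n

/-- Adjacency in the graph `L(n,k)`: `v` is joined to `v + w` for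
`w ∈ {-k,…,k} × {-1,1}`. -/
def LAdj (n k : ℕ) (u v : Torus n) : Prop :=
  ∃ a b : ℤ, a.natAbs ≤ k ∧ (b = 1 ∨ b = -1) ∧ v = u + ((a : ZMod n), (b : ZMod n))

/-- `initProb` on the torus `[n]²` (defined as `0` in the degenerate case `n = 0`). -/
noncomputable def torusProb (n : ℕ) (p : ℝ) (E : Set (Torus n) → Prop) : ℝ :=
  if h : n = 0 then 0 else
    haveI : NeZero n := ⟨h⟩
    initProb (Torus n) p E

/-- A perfect matching of the vertex set, as a fixed-point-free involution. -/
def IsPerfectMatching (n : ℕ) (f : Torus n → Torus n) : Prop :=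
  Function.Involutive f ∧ ∀ v, f v ≠ v

/-- A `k`-admissible `r`-tuple of perfect matchings of `[n]²`: the matchings are pairwise
disjoint and the union with `L(n,k)` has no multiple edges. -/
def Admissible (n k : ℕ) {r : ℕ} (M : Fin r → Torus n → Torus n) : Prop :=
  (∀ i, IsPerfectMatching n (M i)) ∧
  (∀ i j, i ≠ j → ∀ v, M i v ≠ M j v) ∧
  (∀ i v, ¬ LAdj n k v (M i v))

/-- Adjacency in `L*(n,k,r) = M₁ ∪ ⋯ ∪ M_r ∪ L(n,k)`. -/
def LStarAdj (n k : ℕ) {r : ℕ} (M : Fin r → Torus n → Torus n) (u v : Torus n) : Prop :=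
  LAdj n k u v ∨ ∃ i, M i u = v

open scoped Classical in
/-- The probability that `M_r(L*(n,k,r); p)` disseminates, where the `r` perfect matchings
are chosen uniformly at random among `k`-admissible `r`-tuples and each vertex is
initially active with probability `p`, independently. -/
noncomputable def starDissemProb (n k r : ℕ) (p : ℝ) : ℝ :=
  if h : n = 0 then 0 else
    haveI : NeZero n := ⟨h⟩
    (∑ M ∈ Finset.univ.filter (fun M : Fin r → Torus n → Torus n => Admissible n k M),
        initProb (Torus n) p (fun A => majFinal (LStarAdj n k M) (r : ℤ) A = Set.univ)) /
      ((Finset.univ.filter (fun M : Fin r → Torus n → Torus n => Admissible n k M)).card : ℝ)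

/-- The probability that a uniformly random `k`-admissible `r`-tuple of perfect matchings
of `[n]²` satisfies the event `E`. -/
noncomputable def admProb (n k r : ℕ) (E : (Fin r → Torus n → Torus n) → Prop) : ℝ :=
  (Nat.card {M : Fin r → Torus n → Torus n // Admissible n k M ∧ E M} : ℝ) /
    (Nat.card {M : Fin r → Torus n → Torus n // Admissible n k M} : ℝ)

/-- `stepsLe Adj d u v`: `v` is reachable from `u` in at most `d` steps of `Adj`. -/
def stepsLe (Adj : V → V → Prop) : ℕ → V → V → Prop
  | 0, u, v => u = v
  | d + 1, u, v => stepsLe Adj d u v ∨ ∃ w, stepsLe Adj d u w ∧ Adj w v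

/-- Graph distance with respect to the relation `Adj`. -/
noncomputable def relDist (Adj : V → V → Prop) (u v : V) : ℕ :=
  sInf {d | stepsLe Adj d u v}

/-- The diameter of a set `B` : the maximal `Adj`-graph distance between two of its points. -/
noncomputable def setDiam (Adj : V → V → Prop) (B : Set V) : ℕ :=
  sSup {d | ∃ u ∈ B, ∃ v ∈ B, relDist Adj u v = d}

/-- `U` induces a connected subgraph with respect to `Adj`. -/
def ConnIn (Adj : V → V → Prop) (U : Set V) : Prop :=
  ∀ u ∈ U, ∀ v ∈ U, Relation.ReflTransGen (fun x y => x ∈ U ∧ y ∈ U ∧ Adj x y) u v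

/-- The connected component of `x` inside `Z` (with respect to `Adj`). -/
def compOf (Adj : V → V → Prop) (Z : Set V) (x : V) : Set V :=
  {y | y ∈ Z ∧ Relation.ReflTransGen (fun a b => a ∈ Z ∧ b ∈ Z ∧ Adj a b) x y}

/-- `B` is a connected component of the subgraph induced on `Z`. -/
def IsComponentOf (Adj : V → V → Prop) (Z B : Set V) : Prop :=
  ∃ x ∈ Z, B = compOf Adj Z x

/-- Adjacency in the toroidal square lattice `L₁(n)`. -/
def l1Adj (n : ℕ) (u v : Torus n) : Prop :=
  (u.1 = v.1 ∧ (v.2 = u.2 + 1 ∨ v.2 = u.2 - 1)) ∨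
    (u.2 = v.2 ∧ (v.1 = u.1 + 1 ∨ v.1 = u.1 - 1))

/-- Adjacency in the toroidal lattice with diagonals `L∞(n)`. -/
def lInfAdj (n : ℕ) (u v : Torus n) : Prop :=
  u ≠ v ∧ (v.1 = u.1 ∨ v.1 = u.1 + 1 ∨ v.1 = u.1 - 1) ∧
    (v.2 = u.2 ∨ v.2 = u.2 + 1 ∨ v.2 = u.2 - 1)

/-- Ceiling division: `cdiv k m = ⌈k/m⌉`. -/
def cdiv (k m : ℕ) : ℕ := (k + m - 1) / m

/-- The sequence `x_i` defining the set `S^k_m(a,b)`. -/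
def xseq (k m a b i : ℕ) : ℕ :=
  if m ≤ i then b + (m + a + 1 - i) * k
  else b + (a + 1) * k + cdiv k m * ∑ j ∈ Finset.Ico i m, j

/-- The set `S^k_m(a,b) ⊆ ℤ²`: the union over `|i| ≤ m+a+1` of `[-x_i, x_i] × {i}`. -/
def Scloud (k m a b : ℕ) : Set (ℤ × ℤ) :=
  {p | p.2.natAbs ≤ m + a + 1 ∧ p.1.natAbs ≤ xseq k m a b p.2.natAbs}

/-- Canonical projection `ℤ² → [n]²`. -/
def proj (n : ℕ) (p : ℤ × ℤ) : Torus n := ((p.1 : ZMod n), (p.2 : ZMod n))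

/-- A vertex `v` is `m`-good (with respect to the active set `A`) if each of the four sets
`v ± {1,…,k} × {1}`, `v ± {1,…,k} × {-1}` contains at least `2⌈k/m⌉` active vertices. -/
def MGood (n k m : ℕ) (A : Set (Torus n)) (v : Torus n) : Prop :=
  ∀ sx sy : ℤ, (sx = 1 ∨ sx = -1) → (sy = 1 ∨ sy = -1) →
    2 * cdiv k m ≤
      {u | u ∈ A ∧ ∃ a : ℤ, 1 ≤ a ∧ a ≤ (k : ℤ) ∧
        u = v + (((sx * a : ℤ) : ZMod n), ((sy : ℤ) : ZMod n))}.ncard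

/-- Endpoints `a_i` of the `t`-tessellation: `a_i = i*t` for `i < ⌊n/t⌋` and `a_{⌊n/t⌋} = n`. -/
def cellEnd (n t i : ℕ) : ℕ := if i = n / t then n else i * t

/-- Cells of the `t`-tessellation `T(n,t)`, identified with `[⌊n/t⌋]²`. -/
abbrev Cell (n t : ℕ) := Torus (n / t)

/-- The set of vertices of `[n]²` in the cell `c = (i,j)` of the `t`-tessellation:
`[a_i+1, a_{i+1}] × [a_j+1, a_{j+1}]`. -/
def cellSet (n t : ℕ) (c : Cell n t) : Set (Torus n) :=
  {v | ∃ x y : ℕ,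
    c.1.val * t + 1 ≤ x ∧ x ≤ cellEnd n t (c.1.val + 1) ∧
    c.2.val * t + 1 ≤ y ∧ y ≤ cellEnd n t (c.2.val + 1) ∧
    v = ((x : ZMod n), (y : ZMod n))}

/-- A cell is `m`-good if every vertex inside it or within `ℓ₁`-distance `32mk²` of it is
`m`-good or active. -/
def CellGood (n t k m : ℕ) (A : Set (Torus n)) (c : Cell n t) : Prop :=
  ∀ w : Torus n, (∃ v ∈ cellSet n t c, stepsLe (l1Adj n) (32 * m * k ^ 2) v w) →
    (MGood n k m A w ∨ w ∈ A)

/-- A cell is a seed if it contains an active translate of `S^k_m(0,0)`. -/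
def IsSeed (n t k m : ℕ) (A : Set (Torus n)) (c : Cell n t) : Prop :=
  ∃ w : Torus n, ∀ p ∈ Scloud k m 0 0,
    w + proj n p ∈ A ∧ w + proj n p ∈ cellSet n t c

/-- `Z ⊆ [N]²` is `ε`-ubiquitous (with `A = 10⁸`). -/
def Ubiquitous (N : ℕ) (ε : ℝ) (Z : Set (Torus N)) : Prop :=
  ConnIn (l1Adj N) Z ∧
  (1 - 10 ^ 8 * ε) * (N : ℝ) ^ 2 ≤ (Z.ncard : ℝ) ∧
  ∀ (j : ℕ) (B : Fin j → Set (Torus N)), 0 < j →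
    (∀ i, (B i).Nonempty ∧ B i ⊆ Zᶜ ∧ ConnIn (lInfAdj N) (B i)) →
    Pairwise (Function.onFun Disjoint B) →
    ∃ i : Fin j, (setDiam (lInfAdj N) (B i) : ℝ) ≤
      10 ^ 8 / Real.log (1 / ε) * Real.log ((N : ℝ) ^ 2 / (j : ℝ))

/-- A `2`-dependent site-percolation model on `[N]²`: the state of each cell `C` is
independent of the joint state of all cells at `ℓ₁`-distance at least `3` from `C`. -/
def TwoDependent (N : ℕ) (μ : PMF (Torus N → Bool)) : Prop :=
  ∀ (C : Torus N) (E : Set (Torus N → Bool)),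
    (∀ ω ω' : Torus N → Bool,
      (∀ C' : Torus N, ¬ stepsLe (l1Adj N) 2 C C' → ω C' = ω' C') → (ω ∈ E ↔ ω' ∈ E)) →
    ∀ b : Bool,
      μ.toOuterMeasure {ω | ω C = b ∧ ω ∈ E} =
        μ.toOuterMeasure {ω | ω C = b} * μ.toOuterMeasure E

/-- `B` is a largest `ℓ₁`-component of `Z`. -/
def IsLargestL1Component (N : ℕ) (Z B : Set (Torus N)) : Prop :=
  IsComponentOf (l1Adj N) Z B ∧
    ∀ B' : Set (Torus N), IsComponentOf (l1Adj N) Z B' → B'.ncard ≤ B.ncard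

/-- Expectation of a real random variable under a `PMF`. -/
noncomputable def pmfExp {α : Type*} (μ : PMF α) (f : α → ℝ) : ℝ :=
  ∑' a, (μ a).toReal * f a

/-- `N_d`: the number of cells belonging to `ℓ∞`-components of the complement of `G₀`
of `ℓ∞`-diameter exactly `d`. -/
noncomputable def NdCount (N : ℕ) (G₀ : Set (Torus N)) (d : ℕ) : ℕ :=
  {C : Torus N | ∃ B : Set (Torus N),
    IsComponentOf (lInfAdj N) G₀ᶜ B ∧ C ∈ B ∧ setDiam (lInfAdj N) B = d}.ncard

/-- `N'_d`: the number of cells belonging to `ℓ∞`-components of the complement of `G₀`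
of `ℓ∞`-diameter at least `d`. -/
noncomputable def NdGeCount (N : ℕ) (G₀ : Set (Torus N)) (d : ℕ) : ℕ :=
  {C : Torus N | ∃ B : Set (Torus N),
    IsComponentOf (lInfAdj N) G₀ᶜ B ∧ C ∈ B ∧ d ≤ setDiam (lInfAdj N) B}.ncard

/-- A collection of sets of cells `B₁,…,B_s` is stable with respect to the tuple `M` of
perfect matchings. -/
def StableColl (n t : ℕ) {r s : ℕ} (M : Fin r → Torus n → Torus n)
    (B : Fin s → Set (Cell n t)) : Prop :=
  ∀ j : Fin s, ∃ v : Fin 4 → Torus n, Function.Injective v ∧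
    ∀ l : Fin 4, (∃ c ∈ B j, v l ∈ cellSet n t c) ∧
      ∃ i : Fin r, ∃ j' : Fin s, ∃ c ∈ B j', M i (v l) ∈ cellSet n t c

/-- Adjacency in the `m`-dimensional grid `[n]^m` (no wrap-around). -/
def gridAdj (n m : ℕ) (u v : Fin m → Fin n) : Prop :=
  ∃ i : Fin m, ((u i : ℕ) + 1 = (v i : ℕ) ∨ (v i : ℕ) + 1 = (u i : ℕ)) ∧
    ∀ j : Fin m, j ≠ i → u j = v j

end Maj

open Maj

/-!
Let `S_c` be `S^k_m(a,b)` with every row extended by `c` at both ends; as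
`x_i(a+1,b) = x_i(a,b) + k`, `S_k` is `S^k_m(a+1,b)` without its two extreme rows. By induction
on `c ≤ k`, `S_c` is active after `c` rounds. Measure offsets from a new vertex `v` at an end of
row `j` of `S_{c+1}` towards the outside. In the adjacent row towards the centre `v` has at least
`k + min(k+1, x_{j-1} - x_j)` active neighbours; in the adjacent row away from the centre it has
`max(0, k - (x_j - x_{j+1}))` on the inside and, being `m`-good, `2⌈k/m⌉` more on the outside.
Because the decrements `x_i - x_{i+1}` are `i⌈k/m⌉` for `i < m` and `k` afterwards, and
`r ≤ ⌈k/m⌉`, this is the `2k + 1 + r/2` needed. One last round activates the extreme rows, whose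
vertices see all `2k+1` neighbours in the row towards the centre.
-/

namespace Maj

section Percolation

variable {V : Type*} (Adj : V → V → Prop) (r : ℤ)

lemma id_le_majStep : id ≤ majStep Adj r := fun _ => Set.subset_union_left

lemma subset_iterate_majStep (A : Set V) (c : ℕ) : A ⊆ (majStep Adj r)^[c] A :=
  Function.id_le_iterate_of_id_le (id_le_majStep Adj r) c A

lemma iterate_majStep_subset_majFinal (A : Set V) (c : ℕ) :
    (majStep Adj r)^[c] A ⊆ majFinal Adj r A :=
  Set.subset_iUnion (fun s => (majStep Adj r)^[s] A) c

end Percolation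

lemma eq_of_intCast_zmod_eq {n : ℕ} {x y : ℤ} (h : (x : ZMod n) = y) (hxy : |x - y| < n) :
    x = y := by
  have hdvd := (ZMod.intCast_eq_intCast_iff_dvd_sub x y n).1 h
  have := Int.eq_zero_of_abs_lt_dvd hdvd (by rwa [abs_sub_comm])
  omega

lemma proj_add (n : ℕ) (p q : ℤ × ℤ) : proj n (p + q) = proj n p + proj n q :=
  Prod.ext (Int.cast_add _ _) (Int.cast_add _ _)

section Neighbourhood

open scoped Classical

variable {n k : ℕ}

lemma ncard_nbrSet_inter (hk : 0 < k) (hkn : 2 * k + 1 ≤ n) (v : Torus n) {ε s : ℤ}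
    (hε : ε = 1 ∨ ε = -1) (hs : s = 1 ∨ s = -1) (S : Set (Torus n)) :
    (nbrSet (LAdj n k) v ∩ S).ncard =
      #{p ∈ Icc (-k : ℤ) k ×ˢ {s, -s} | v + proj n (ε * p.1, p.2) ∈ S} := by
  have hεε : ε * ε = 1 := by rcases hε with rfl | rfl <;> norm_num
  have himage : nbrSet (LAdj n k) v ∩ S =
      (fun p : ℤ × ℤ => v + proj n (ε * p.1, p.2)) ''
        ↑{p ∈ Icc (-k : ℤ) k ×ˢ {s, -s} | v + proj n (ε * p.1, p.2) ∈ S} := by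
    ext u
    constructor
    · rintro ⟨⟨a, w, ha, hw, rfl⟩, hu⟩
      have hproj : proj n (ε * (ε * a), w) = ((a : ZMod n), (w : ZMod n)) := by
        rw [← mul_assoc, hεε, one_mul]; rfl
      refine ⟨(ε * a, w), ?_, by simp only [hproj]⟩
      simp only [coe_filter, mem_product, mem_Icc, mem_insert, mem_singleton, hproj,
        Set.mem_ofPred_eq]
      refine ⟨⟨?_, ?_⟩, hu⟩
      · rcases hε with rfl | rfl <;> omega
      · rcases hs with rfl | rfl <;> omega
    · rintro ⟨⟨b, w⟩, hp, rfl⟩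
      simp only [coe_filter, mem_product, mem_Icc, mem_insert, mem_singleton,
        Set.mem_ofPred_eq] at hp
      obtain ⟨⟨⟨hb1, hb2⟩, hw⟩, hS⟩ := hp
      refine ⟨⟨ε * b, w, ?_, ?_, rfl⟩, hS⟩
      · rcases hε with rfl | rfl <;> omega
      · rcases hs with rfl | rfl <;> omega
  rw [himage, Set.InjOn.ncard_image, Set.ncard_coe_finset]
  rintro ⟨b, w⟩ hp ⟨b', w'⟩ hp' h
  simp only [coe_filter, mem_product, mem_Icc, mem_insert, mem_singleton,
    Set.mem_ofPred_eq] at hp hp'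
  have h' : ((ε * b : ℤ) : ZMod n) = ((ε * b' : ℤ) : ZMod n) ∧ (w : ZMod n) = w' :=
    Prod.ext_iff.1 (add_left_cancel (h : v + _ = v + _))
  have hb := eq_of_intCast_zmod_eq h'.1 (by rcases hε with rfl | rfl <;> rw [abs_lt] <;> omega)
  have hw := eq_of_intCast_zmod_eq h'.2 (by rcases hs with rfl | rfl <;> rw [abs_lt] <;> omega)
  rcases hε with rfl | rfl <;> simp only [Prod.mk.injEq] <;> omega

lemma ncard_nbrSet (hk : 0 < k) (hkn : 2 * k + 1 ≤ n) (v : Torus n) :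
    (nbrSet (LAdj n k) v).ncard = 4 * k + 2 := by
  have h := ncard_nbrSet_inter hk hkn v (Or.inl rfl) (Or.inl rfl) Set.univ
  simp only [Set.inter_univ, Set.mem_univ, filter_true, card_product, Int.card_Icc,
    card_pair (show (1 : ℤ) ≠ -1 by norm_num)] at h
  omega

lemma MGood.le_card_filter {m : ℕ} {A : Set (Torus n)} {v : Torus n} (hv : MGood n k m A v)
    {ε s : ℤ} (hε : ε = 1 ∨ ε = -1) (hs : s = 1 ∨ s = -1) :
    2 * cdiv k m ≤ #{b ∈ Icc (1 : ℤ) k | v + proj n (ε * b, s) ∈ A} := by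
  refine (hv ε s hε hs).trans ?_
  calc _ = (↑(image (fun b : ℤ => v + proj n (ε * b, s))
          {b ∈ Icc (1 : ℤ) k | v + proj n (ε * b, s) ∈ A}) : Set (Torus n)).ncard := by
        congr 1
        ext u
        simp only [coe_image, coe_filter, mem_Icc, Set.mem_image, Set.mem_ofPred_eq]
        constructor
        · rintro ⟨hu, b, hb1, hb2, rfl⟩
          exact ⟨b, ⟨⟨hb1, hb2⟩, hu⟩, rfl⟩
        · rintro ⟨b, ⟨⟨hb1, hb2⟩, hu⟩, rfl⟩
          exact ⟨hu, b, hb1, hb2, rfl⟩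
    _ ≤ _ := by rw [Set.ncard_coe_finset]; exact card_image_le

lemma mem_majStep_of_rows {m : ℕ} {r : ℤ} (hk : 0 < k) (hkn : 2 * k + 1 ≤ n)
    {A S : Set (Torus n)} (hAS : A ⊆ S) {v : Torus n} {ε s : ℤ}
    (hε : ε = 1 ∨ ε = -1) (hs : s = 1 ∨ s = -1) {hiT hiA : ℤ} (hiTk : hiT ≤ k) (hiA1 : hiA < 1)
    (htoward : ∀ b ∈ Icc (-k : ℤ) hiT, v + proj n (ε * b, -s) ∈ S)
    (haway : ∀ b ∈ Icc (-k : ℤ) hiA, v + proj n (ε * b, s) ∈ S)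
    (hv : MGood n k m A v)
    (hcount : 4 * k + 2 + r ≤
      2 * (#(Icc (-k : ℤ) hiT) + #(Icc (-k : ℤ) hiA) + 2 * cdiv k m : ℕ)) :
    v ∈ majStep (LAdj n k) r S := by
  refine Or.inr ?_
  show ((nbrSet _ v).ncard : ℤ) + r ≤ 2 * ((nbrSet _ v ∩ S).ncard : ℤ)
  set B := {b ∈ Icc (1 : ℤ) k | v + proj n (ε * b, s) ∈ A}
  have hs' : s ≠ -s := by rcases hs with rfl | rfl <;> norm_num
  have hsub : Icc (-k : ℤ) hiT ×ˢ {-s} ∪ (Icc (-k : ℤ) hiA ∪ B) ×ˢ {s} ⊆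
      {p ∈ Icc (-k : ℤ) k ×ˢ {s, -s} | v + proj n (ε * p.1, p.2) ∈ S} := by
    rintro ⟨b, w⟩ hp
    simp only [B, mem_union, mem_product, mem_Icc, mem_singleton, mem_filter,
      mem_insert] at hp ⊢
    rcases hp with ⟨hb, rfl⟩ | ⟨hb | ⟨hb, hA⟩, rfl⟩
    · exact ⟨⟨⟨hb.1, hb.2.trans hiTk⟩, Or.inr rfl⟩, htoward b (mem_Icc.2 hb)⟩
    · exact ⟨⟨⟨hb.1, by omega⟩, Or.inl rfl⟩, haway b (mem_Icc.2 hb)⟩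
    · exact ⟨⟨⟨by omega, hb.2⟩, Or.inl rfl⟩, hAS hA⟩
  have hrows : Disjoint (Icc (-k : ℤ) hiT ×ˢ {-s}) ((Icc (-k : ℤ) hiA ∪ B) ×ˢ {s}) :=
    disjoint_product.2 (Or.inr (disjoint_singleton.2 hs'.symm))
  have hB_disj : Disjoint (Icc (-k : ℤ) hiA) B := by
    refine disjoint_left.2 fun b hb hbB => ?_
    simp only [B, mem_filter, mem_Icc] at hb hbB
    omega
  have hle := card_le_card hsub
  rw [card_union_of_disjoint hrows, card_product, card_product,
    card_union_of_disjoint hB_disj, card_singleton, card_singleton, mul_one, mul_one] at hle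
  rw [ncard_nbrSet hk hkn, ncard_nbrSet_inter hk hkn v hε hs]
  have hB : 2 * cdiv k m ≤ #B := hv.le_card_filter hε hs
  push_cast at hcount ⊢
  omega

end Neighbourhood

lemma two_le_cdiv {k m : ℕ} (hm : 1 ≤ m) (hmk : m < k) : 2 ≤ cdiv k m := by
  rw [cdiv, Nat.le_div_iff_mul_le (by omega)]
  omega

lemma le_mul_cdiv {k m : ℕ} (hm : 1 ≤ m) : k ≤ m * cdiv k m := by
  have h1 := Nat.div_add_mod (k + m - 1) m
  have h2 : (k + m - 1) % m < m := Nat.mod_lt _ (by omega)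
  rw [cdiv]
  omega

def xdrop (k m j : ℕ) : ℕ := if j < m then j * cdiv k m else k

-- Truncated subtraction is intended: `k - xdrop k m j` is the active run in the outer row.
lemma xdrop_budget {k m : ℕ} (hm : 1 ≤ m) (hmk : m < k) (j : ℕ) :
    2 * k + 2 ≤ 2 * min (k + 1) (xdrop k m (j - 1)) + 2 * (k - xdrop k m j) + 3 * cdiv k m := by
  have hq := two_le_cdiv hm hmk
  have hkq := le_mul_cdiv (k := k) hm
  unfold xdrop
  cases j with
  | zero =>
    rw [Nat.zero_sub, if_pos (show 0 < m from hm), zero_mul]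
    omega
  | succ i =>
    rw [Nat.add_sub_cancel, add_one_mul]
    split_ifs with hi hi'
    · omega
    · obtain rfl : m = i + 1 := by omega
      rw [add_one_mul] at hkq
      omega
    · omega
    · omega

section Cloud

variable {k m a b j : ℕ}

lemma xseq_of_le (h : m ≤ j) : xseq k m a b j = b + (m + a + 1 - j) * k := if_pos h

lemma xseq_of_lt (h : j < m) :
    xseq k m a b j = b + (a + 1) * k + cdiv k m * ∑ i ∈ Ico j m, i := if_neg (by omega)

lemma xseq_eq_xseq_succ_add_xdrop (h : j ≤ m + a) :
    xseq k m a b j = xseq k m a b (j + 1) + xdrop k m j := by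
  unfold xdrop
  by_cases hj : j < m
  · rw [if_pos hj, xseq_of_lt hj, sum_eq_sum_Ico_succ_bot hj]
    rcases (Nat.succ_le_of_lt hj).eq_or_lt with hjm | hjm
    · rw [← hjm, xseq_of_le le_rfl, Ico_self, sum_empty,
        show j + 1 + a + 1 - (j + 1) = a + 1 by omega]
      ring
    · rw [xseq_of_lt hjm]
      ring
  · rw [if_neg hj, xseq_of_le (by omega), xseq_of_le (by omega)]
    have : m + a + 1 - j = (m + a + 1 - (j + 1)) + 1 := by omega
    rw [this]
    ring

lemma le_xseq (h : j ≤ m + a) : k ≤ xseq k m a b j := by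
  by_cases hj : m ≤ j
  · rw [xseq_of_le hj]
    have := Nat.mul_le_mul_right k (show 1 ≤ m + a + 1 - j by omega)
    omega
  · rw [xseq_of_lt (by omega)]
    have := Nat.mul_le_mul_right k (show 1 ≤ a + 1 by omega)
    omega

lemma xseq_succ_left (h : j ≤ m + a + 1) : xseq k m (a + 1) b j = xseq k m a b j + k := by
  by_cases hj : m ≤ j
  · rw [xseq_of_le hj, xseq_of_le hj]
    have : m + (a + 1) + 1 - j = (m + a + 1 - j) + 1 := by omega
    rw [this]
    ring
  · rw [xseq_of_lt (by omega), xseq_of_lt (by omega)]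
    ring

lemma xseq_succ_left_top : xseq k m (a + 1) b (m + a + 2) = b := by
  rw [xseq_of_le (by omega), show m + (a + 1) + 1 - (m + a + 2) = 0 by omega, zero_mul,
    add_zero]

end Cloud

def widenedCloud (k m a b c : ℕ) : Set (ℤ × ℤ) :=
  {p | p.2.natAbs ≤ m + a + 1 ∧ p.1.natAbs ≤ xseq k m a b p.2.natAbs + c}

variable {n k m a b : ℕ} {r : ℤ}

lemma exists_unit_mul_natAbs (x : ℤ) : ∃ ε : ℤ, (ε = 1 ∨ ε = -1) ∧ x = ε * x.natAbs := by
  rcases le_or_gt 0 x with hx | hx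
  · exact ⟨1, Or.inl rfl, by omega⟩
  · exact ⟨-1, Or.inr rfl, by omega⟩

lemma proj_unit_mul_add_mem {c : ℕ} {S : Set (Torus n)}
    (hS : ∀ p ∈ widenedCloud k m a b c, proj n p ∈ S) {ε : ℤ} (hε : ε = 1 ∨ ε = -1)
    {T d i w : ℤ} (hrow : (i + w).natAbs ≤ m + a + 1)
    (hlo : -((xseq k m a b (i + w).natAbs + c : ℕ) : ℤ) ≤ T + d)
    (hhi : T + d ≤ (xseq k m a b (i + w).natAbs + c : ℕ)) :
    proj n (ε * T, i) + proj n (ε * d, w) ∈ S := by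
  rw [← proj_add, Prod.mk_add_mk, ← mul_add]
  refine hS _ ⟨hrow, ?_⟩
  dsimp only
  rcases hε with rfl | rfl <;> omega

lemma xseq_natAbs_sub_unit (hm : 1 ≤ m) {i s : ℤ} (hs : s = 1 ∨ s = -1)
    (hsi : i = s * i.natAbs) (hi : i.natAbs ≤ m + a + 1) :
    (i - s).natAbs ≤ m + a ∧
      xseq k m a b (i - s).natAbs = xseq k m a b i.natAbs + xdrop k m (i.natAbs - 1) := by
  rcases Nat.eq_zero_or_pos i.natAbs with hi0 | hi0
  -- For `i = 0` the inner row is `∓1`, and `x_1 = x_0` matches `xdrop k m (0 - 1) = 0`.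
  · have h1 : (i - s).natAbs = 1 := by rcases hs with rfl | rfl <;> omega
    have h0 := xseq_eq_xseq_succ_add_xdrop (k := k) (b := b) (show 0 ≤ m + a by omega)
    have hd0 : xdrop k m 0 = 0 := by rw [xdrop, if_pos (show 0 < m from hm), zero_mul]
    rw [h1, hi0, Nat.zero_sub, hd0]
    rw [hd0, Nat.zero_add] at h0
    exact ⟨by omega, by omega⟩
  · have h1 : (i - s).natAbs = i.natAbs - 1 := by rcases hs with rfl | rfl <;> omega
    have h0 := xseq_eq_xseq_succ_add_xdrop (k := k) (b := b)
      (show i.natAbs - 1 ≤ m + a by omega)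
    rw [Nat.sub_add_cancel hi0] at h0
    exact ⟨by omega, by rw [h1, h0]⟩

lemma widenedCloud_succ_subset_majStep (hm : 1 ≤ m) (hmk : m < k) (hr : r ≤ cdiv k m)
    (hkn : 2 * k + 1 ≤ n) {A S : Set (Torus n)} (hAS : A ⊆ S)
    (hgood : ∀ p ∈ Scloud k m (a + 1) b, MGood n k m A (proj n p) ∨ proj n p ∈ A)
    {c : ℕ} (hc : c < k) (hS : ∀ p ∈ widenedCloud k m a b c, proj n p ∈ S) :
    ∀ p ∈ widenedCloud k m a b (c + 1), proj n p ∈ majStep (LAdj n k) r S := by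
  rintro ⟨t, i⟩ ⟨hi, ht⟩
  dsimp only at hi ht
  by_cases hin : t.natAbs ≤ xseq k m a b i.natAbs + c
  · exact id_le_majStep _ _ _ (hS _ ⟨hi, hin⟩)
  have hcloud : (t, i) ∈ Scloud k m (a + 1) b :=
    ⟨by dsimp only; omega, by dsimp only; rw [xseq_succ_left hi]; omega⟩
  rcases hgood _ hcloud with hv | hA
  swap
  · exact id_le_majStep _ _ _ (hAS hA)
  obtain ⟨ε, hε, htε⟩ := exists_unit_mul_natAbs t
  obtain ⟨s, hs, hsj⟩ := exists_unit_mul_natAbs i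
  have hinner := xseq_natAbs_sub_unit (k := k) (b := b) hm hs hsj hi
  set j := i.natAbs
  have hxT := le_xseq (k := k) (b := b) hinner.1
  have hT : (t.natAbs : ℤ) = xseq k m a b j + c + 1 := by omega
  rw [htε]
  refine mem_majStep_of_rows (by omega) hkn hAS hε hs (hiT := min k (xdrop k m (j - 1) - 1))
    (hiA := -xdrop k m j - 1) (min_le_left _ _) (by omega) ?_ ?_ (htε ▸ hv) ?_
  · intro d hd
    rw [mem_Icc] at hd
    exact proj_unit_mul_add_mem hS hε (by rw [← sub_eq_add_neg]; omega)
      (by rw [← sub_eq_add_neg, hinner.2]; omega) (by rw [← sub_eq_add_neg, hinner.2]; omega)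
  · intro d hd
    rw [mem_Icc] at hd
    have hjm : j < m := by
      by_contra hjm
      simp only [xdrop, if_neg hjm] at hd
      omega
    have h0 := xseq_eq_xseq_succ_add_xdrop (k := k) (b := b) (show j ≤ m + a by omega)
    have hxj := le_xseq (k := k) (b := b) (show j ≤ m + a by omega)
    have h1 : (i + s).natAbs = j + 1 := by rcases hs with rfl | rfl <;> omega
    exact proj_unit_mul_add_mem hS hε (by omega) (by rw [h1]; omega) (by rw [h1]; omega)
  · have := xdrop_budget hm hmk j
    rw [Int.card_Icc, Int.card_Icc]
    omega

lemma topRow_mem_majStep (hm : 1 ≤ m) (hmk : m < k) (hr : r ≤ cdiv k m)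
    (hkn : 2 * k + 1 ≤ n) {A S : Set (Torus n)} (hAS : A ⊆ S)
    (hgood : ∀ p ∈ Scloud k m (a + 1) b, MGood n k m A (proj n p) ∨ proj n p ∈ A)
    (hS : ∀ p ∈ widenedCloud k m a b k, proj n p ∈ S) {t i : ℤ}
    (hi : i.natAbs = m + a + 2) (ht : t.natAbs ≤ b) :
    proj n (t, i) ∈ majStep (LAdj n k) r S := by
  have hcloud : (t, i) ∈ Scloud k m (a + 1) b :=
    ⟨by dsimp only; omega, by dsimp only; rw [hi, xseq_succ_left_top]; exact ht⟩
  rcases hgood _ hcloud with hv | hA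
  swap
  · exact id_le_majStep _ _ _ (hAS hA)
  obtain ⟨s, hs, hsi⟩ := exists_unit_mul_natAbs i
  have htop : xseq k m a b (m + a + 1) = b := by
    rw [xseq_of_le (by omega), Nat.sub_self, zero_mul, add_zero]
  have h1 : (i + -s).natAbs = m + a + 1 := by rcases hs with rfl | rfl <;> omega
  rw [← one_mul t] at hv ⊢
  refine mem_majStep_of_rows (by omega) hkn hAS (Or.inl rfl) hs (hiT := k) (hiA := -k - 1)
    le_rfl (by omega) (fun d hd => ?_) (fun d hd => by rw [mem_Icc] at hd; omega) hv ?_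
  · rw [mem_Icc] at hd
    exact proj_unit_mul_add_mem hS (Or.inl rfl) (by omega) (by rw [h1, htop]; omega)
      (by rw [h1, htop]; omega)
  · rw [Int.card_Icc, Int.card_Icc]
    have := two_le_cdiv hm hmk
    omega

lemma widenedCloud_subset_iterate (hm : 1 ≤ m) (hmk : m < k) (hr : r ≤ cdiv k m)
    (hkn : 2 * k + 1 ≤ n) {A : Set (Torus n)} (hact : ∀ p ∈ Scloud k m a b, proj n p ∈ A)
    (hgood : ∀ p ∈ Scloud k m (a + 1) b, MGood n k m A (proj n p) ∨ proj n p ∈ A) :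
    ∀ c ≤ k, ∀ p ∈ widenedCloud k m a b c, proj n p ∈ (majStep (LAdj n k) r)^[c] A := by
  intro c
  induction c with
  | zero => exact fun _ p hp => hact p hp
  | succ c ih =>
    intro hc p hp
    rw [Function.iterate_succ_apply']
    exact widenedCloud_succ_subset_majStep hm hmk hr hkn (subset_iterate_majStep _ _ A c)
      hgood hc (ih (by omega)) p hp

end Maj

open Maj

/-- Lemma 2.1 of the paper. If `S^k_m(a,b)` is active and all vertices in
`S^k_m(a+1,b)` are `m`-good or active, then deterministically `S^k_m(a+1,b)` eventually
becomes active in the `r`-majority bootstrap percolation process on `L(n,k)`. -/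
theorem statement_3 (n k m a b : ℕ) (r : ℤ) (hm1 : 1 ≤ m) (hmk : m < k)
    (hr : r ≤ (cdiv k m : ℤ)) (hkn : 2 * k + 1 ≤ n)
    (A : Set (Torus n))
    (hact : ∀ p ∈ Scloud k m a b, proj n p ∈ A)
    (hgood : ∀ p ∈ Scloud k m (a + 1) b, MGood n k m A (proj n p) ∨ proj n p ∈ A) :
    ∀ p ∈ Scloud k m (a + 1) b, proj n p ∈ majFinal (LAdj n k) r A := by
  have hstage := widenedCloud_subset_iterate hm1 hmk hr hkn hact hgood k le_rfl
  rintro ⟨t, i⟩ ⟨hi, ht⟩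
  dsimp only at hi ht
  rcases Nat.lt_or_ge i.natAbs (m + a + 2) with hi' | hi'
  · refine iterate_majStep_subset_majFinal _ _ _ k (hstage _ ⟨by dsimp only; omega, ?_⟩)
    dsimp only
    rwa [← xseq_succ_left (by omega)]
  · have hi' : i.natAbs = m + a + 2 := by omega
    rw [hi', xseq_succ_left_top] at ht
    refine iterate_majStep_subset_majFinal _ _ _ (k + 1) ?_
    rw [Function.iterate_succ_apply']
    exact topRow_mem_majStep hm1 hmk hr hkn (subset_iterate_majStep _ _ A k) hgood hstage hi' ht
end

section
/- Let n be even, let S ⊆ Z ⊆ [n]² with |S| = 4s for some s ≥ 1 and |Z| = z, and suppose z + 2(4k+r+2)²(4rs) ≤ n²/2 and 4erz ≤ n²/2. Let M = (M₁,…,M_r) be a k-admissible r-tuple of perfect matchings of [n]² chosen uniformly at random. Then the probability that every vertex of S is matched by at least one matching of M to a vertex of Z is at most (16rz/n²)^{2s}. -/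
open Finset Filter

open Maj

/-! Switching. Suppose `M i` matches `v ∈ S` to `a ∈ Z`. Conjugating `M i` by the transposition
`(a x)` replaces its edges `{v, a}` and `{x, M i x}` by `{v, x}` and `{a, M i x}`; for all but
`O(r + k + s)` partners `x` the result is again admissible and keeps every previously pinned edge,
and `(M, x)` can be recovered from it. Hence the admissible tuples pinning one more edge `{v, a}`
into `M i` are at most a fraction `2/n²` of those pinning the earlier ones. Summing over the
`r|Z|` choices of `(i, a)` and discarding `v` and `a` from `S`, each of the `2s` rounds allowed by
`|S| = 4s` costs a factor `2r|Z|/n²`. -/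

section SwapConj

variable {α : Type*} [DecidableEq α] {f : α → α}

theorem Function.Involutive.swap_conj (hf : Function.Involutive f) (a x : α) :
    Function.Involutive (Equiv.swap a x ∘ f ∘ Equiv.swap a x) := fun u => by
  simp [hf (Equiv.swap a x u)]

theorem swap_conj_ne_self (hf : ∀ u, f u ≠ u) (a x u : α) :
    (Equiv.swap a x ∘ f ∘ Equiv.swap a x) u ≠ u :=
  fun h => hf (Equiv.swap a x u) (by simpa using congrArg (Equiv.swap a x) h)

theorem swap_conj_apply_of_ne {a x u : α} (hua : u ≠ a) (hux : u ≠ x) (hfua : f u ≠ a)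
    (hfux : f u ≠ x) : (Equiv.swap a x ∘ f ∘ Equiv.swap a x) u = f u := by
  simp [Equiv.swap_apply_of_ne_of_ne, *]

theorem swap_conj_apply_of_apply_eq {v a x : α} (hfp : ∀ u, f u ≠ u) (hva : f v = a)
    (hxv : x ≠ v) : (Equiv.swap a x ∘ f ∘ Equiv.swap a x) v = x := by
  have hav : v ≠ a := hva ▸ (hfp v).symm
  simp [Equiv.swap_apply_of_ne_of_ne hav hxv.symm, hva]

/-- Conjugating `f` by the transposition of `a = f v` and `x` trades the pairs `{v, a}` and
`{x, f x}` of `f` for `{v, x}` and `{a, f x}`. -/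
theorem forall_swap_conj {v a x : α} (hf : Function.Involutive f) (hfp : ∀ u, f u ≠ u)
    (hva : f v = a) (hxv : x ≠ v) {P : α → α → Prop} (hP : ∀ u w, P u w → P w u)
    (hPf : ∀ u, P u (f u)) (hvx : P v x) (hax : P a (f x)) (u : α) :
    P u ((Equiv.swap a x ∘ f ∘ Equiv.swap a x) u) := by
  have hav : v ≠ a := hva ▸ (hfp v).symm
  have hfa : f a = v := hva ▸ hf v
  have hfxa : f x ≠ a := fun h => hxv (hf.injective (h.trans hva.symm))
  by_cases huv : u = v
  · subst huv; rwa [swap_conj_apply_of_apply_eq hfp hva hxv]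
  by_cases hux : u = x
  · subst hux; simpa [hfa, Equiv.swap_apply_of_ne_of_ne hav hxv.symm] using hP _ _ hvx
  by_cases hua : u = a
  · subst hua; simpa [Equiv.swap_apply_of_ne_of_ne hfxa (hfp x)] using hax
  by_cases hufx : u = f x
  · subst hufx; simpa [Equiv.swap_apply_of_ne_of_ne hfxa (hfp x), hf x] using hP _ _ hax
  rw [swap_conj_apply_of_ne hua hux (fun h => huv (hf.injective (h.trans hva.symm)))
    (fun h => hufx (by rw [← h, hf u]))]
  exact hPf u

end SwapConj

section Switching

open scoped Classical

variable {α : Type*} [DecidableEq α] {r : ℕ} {G : α → α → Prop}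

def AdmissibleFor (G : α → α → Prop) (M : Fin r → α → α) : Prop :=
  (∀ i, Function.Involutive (M i) ∧ ∀ v, M i v ≠ v) ∧
  (∀ i j, i ≠ j → ∀ v, M i v ≠ M j v) ∧
  (∀ i v, ¬ G v (M i v))

def pinnedVerts (F : List (Fin r × α × α)) : Finset α :=
  (F.map fun t => t.2.1).toFinset ∪ (F.map fun t => t.2.2).toFinset

theorem fst_mem_pinnedVerts {F : List (Fin r × α × α)} {t : Fin r × α × α} (ht : t ∈ F) :
    t.2.1 ∈ pinnedVerts F := by
  simp only [pinnedVerts, mem_union, List.mem_toFinset, List.mem_map]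
  exact Or.inl ⟨t, ht, rfl⟩

theorem snd_mem_pinnedVerts {F : List (Fin r × α × α)} {t : Fin r × α × α} (ht : t ∈ F) :
    t.2.2 ∈ pinnedVerts F := by
  simp only [pinnedVerts, mem_union, List.mem_toFinset, List.mem_map]
  exact Or.inr ⟨t, ht, rfl⟩

theorem card_pinnedVerts_le (F : List (Fin r × α × α)) : #(pinnedVerts F) ≤ 2 * F.length := by
  refine (card_union_le _ _).trans ?_
  have h1 := (F.map fun t => t.2.1).toFinset_card_le
  have h2 := (F.map fun t => t.2.2).toFinset_card_le
  simp only [List.length_map] at h1 h2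
  omega

theorem pinnedVerts_cons (t : Fin r × α × α) (F : List (Fin r × α × α)) :
    pinnedVerts (t :: F) = insert t.2.1 (insert t.2.2 (pinnedVerts F)) := by
  ext w
  simp [pinnedVerts, or_left_comm]

def switchAt (M : Fin r → α → α) (i : Fin r) (a x : α) : Fin r → α → α :=
  Function.update M i (Equiv.swap a x ∘ M i ∘ Equiv.swap a x)

theorem switchAt_self (M : Fin r → α → α) (i : Fin r) (a x : α) :
    switchAt M i a x i = Equiv.swap a x ∘ M i ∘ Equiv.swap a x :=
  Function.update_self ..

theorem switchAt_of_ne (M : Fin r → α → α) {i j : Fin r} (a x : α) (hj : j ≠ i) :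
    switchAt M i a x j = M j :=
  Function.update_of_ne hj ..

theorem switchAt_injective {i : Fin r} {v a x x' : α} {M M' : Fin r → α → α}
    (hfp : ∀ u, M i u ≠ u) (hfp' : ∀ u, M' i u ≠ u) (hva : M i v = a) (hva' : M' i v = a)
    (hxv : x ≠ v) (hxv' : x' ≠ v) (h : switchAt M i a x = switchAt M' i a x') :
    M = M' ∧ x = x' := by
  have hx : x = x' := by
    have := congrFun (congrFun h i) v
    rwa [switchAt_self, switchAt_self, swap_conj_apply_of_apply_eq hfp hva hxv,
      swap_conj_apply_of_apply_eq hfp' hva' hxv'] at this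
  subst hx
  refine ⟨funext fun j => ?_, rfl⟩
  rcases eq_or_ne j i with rfl | hj
  · have := congrArg (fun g => Equiv.swap a x ∘ g ∘ Equiv.swap a x) (congrFun h j)
    simpa [switchAt_self, Function.comp_def] using this
  · simpa [switchAt_of_ne _ _ _ hj] using congrFun h j

theorem admissibleFor_switchAt (hG : ∀ u w, G u w → G w u) {M : Fin r → α → α}
    (hM : AdmissibleFor G M) {i : Fin r} {v a x : α} (hva : M i v = a) (hxv : x ≠ v)
    (hvx : ∀ j, M j v ≠ x) (hGvx : ¬ G v x) (hax : ∀ j, M j a ≠ M i x)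
    (hGax : ¬ G a (M i x)) :
    AdmissibleFor G (switchAt M i a x) := by
  obtain ⟨hmatch, hdisj, havoid⟩ := hM
  obtain ⟨hf, hfp⟩ := hmatch i
  refine ⟨fun j => ?_, fun j j' hjj' u => ?_, fun j u => ?_⟩
  · rcases eq_or_ne j i with rfl | hj
    · rw [switchAt_self]; exact ⟨hf.swap_conj a x, swap_conj_ne_self hfp a x⟩
    · rw [switchAt_of_ne _ _ _ hj]; exact hmatch j
  · have key : ∀ j, j ≠ i → ∀ u, switchAt M i a x i u ≠ M j u := fun j hj => by
      rw [switchAt_self]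
      exact forall_swap_conj (P := fun u w => w ≠ M j u) hf hfp hva hxv
        (fun u w h h' => h (by rw [h', (hmatch j).1 w])) (fun u => hdisj i j hj.symm u)
        (hvx j).symm (hax j).symm
    rcases eq_or_ne j i with rfl | hj
    · rw [switchAt_of_ne _ _ _ hjj'.symm]; exact key j' hjj'.symm u
    rcases eq_or_ne j' i with rfl | hj'
    · rw [switchAt_of_ne _ _ _ hj]; exact (key j hj u).symm
    · rw [switchAt_of_ne _ _ _ hj, switchAt_of_ne _ _ _ hj']; exact hdisj j j' hjj' u
  · rcases eq_or_ne j i with rfl | hj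
    · rw [switchAt_self]
      exact forall_swap_conj (P := fun u w => ¬ G u w) hf hfp hva hxv
        (fun u w h h' => h (hG w u h')) (havoid j) hGvx hGax u
    · rw [switchAt_of_ne _ _ _ hj]; exact havoid j u

variable [Fintype α]

noncomputable def pinnedAdmissible (G : α → α → Prop) (F : List (Fin r × α × α)) :
    Finset (Fin r → α → α) :=
  {M | AdmissibleFor G M ∧ ∀ t ∈ F, M t.1 t.2.1 = t.2.2}

theorem mem_pinnedAdmissible {F : List (Fin r × α × α)} {M : Fin r → α → α} :
    M ∈ pinnedAdmissible G F ↔ AdmissibleFor G M ∧ ∀ t ∈ F, M t.1 t.2.1 = t.2.2 := by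
  simp [pinnedAdmissible]

noncomputable def forbiddenPartners (G : α → α → Prop) (M : Fin r → α → α) (i : Fin r)
    (v : α) (F : List (Fin r × α × α)) : Finset α :=
  insert v (univ.image (M · v) ∪ univ.filter (G v) ∪ pinnedVerts F) ∪
    (univ.image (M · (M i v)) ∪ univ.filter (G (M i v))).image (M i)

theorem card_forbiddenPartners_le {D : ℕ} (hD : ∀ u, #(univ.filter (G u)) ≤ D)
    (M : Fin r → α → α) (i : Fin r) (v : α) (F : List (Fin r × α × α)) :
    #(forbiddenPartners G M i v F) ≤ 1 + 2 * r + 2 * D + 2 * F.length := by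
  have hM : ∀ u, #(univ.image (M · u)) ≤ r := fun u => card_image_le.trans (by simp)
  have := card_pinnedVerts_le F
  have := card_union_le (univ.image (M · v) ∪ univ.filter (G v)) (pinnedVerts F)
  have := card_union_le (univ.image (M · v)) (univ.filter (G v))
  have := card_image_le (s := univ.image (M · (M i v)) ∪ univ.filter (G (M i v))) (f := M i)
  have := card_union_le (univ.image (M · (M i v))) (univ.filter (G (M i v)))
  have := hM v; have := hM (M i v); have := hD v; have := hD (M i v)
  grw [forbiddenPartners, card_union_le, card_insert_le]
  omega

theorem switchAt_apply_of_mem {F : List (Fin r × α × α)} {i : Fin r} {v a x : α}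
    (hv : v ∉ pinnedVerts F) (hx : x ∉ pinnedVerts F) {M : Fin r → α → α}
    (hM : M ∈ pinnedAdmissible G ((i, v, a) :: F)) {t : Fin r × α × α} (ht : t ∈ F) :
    switchAt M i a x t.1 t.2.1 = t.2.2 := by
  obtain ⟨⟨hmatch, -⟩, hpin⟩ := mem_pinnedAdmissible.1 hM
  have hva : M i v = a := hpin _ List.mem_cons_self
  have hpin' := hpin t (List.mem_cons_of_mem _ ht)
  rcases eq_or_ne t.1 i with hti | hti
  · have hu := fst_mem_pinnedVerts ht
    have hw := snd_mem_pinnedVerts ht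
    have hf := (hmatch i).1
    rw [hti] at hpin'
    rw [hti, switchAt_self, swap_conj_apply_of_ne, hpin']
    · rintro rfl
      exact hv (by rwa [← hf v, hva, hpin'])
    · rintro rfl; exact hx hu
    · exact fun h => hv (hf.injective (h.trans hva.symm) ▸ hu)
    · exact fun h => hx (h ▸ hpin' ▸ hw)
  · rw [switchAt_of_ne _ _ _ hti]; exact hpin'

theorem switchAt_mem_pinnedAdmissible (hG : ∀ u w, G u w → G w u) {F : List (Fin r × α × α)}
    {i : Fin r} {v a : α} (hv : v ∉ pinnedVerts F) {M : Fin r → α → α}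
    (hM : M ∈ pinnedAdmissible G ((i, v, a) :: F)) {x : α}
    (hx : x ∉ forbiddenPartners G M i v F) : switchAt M i a x ∈ pinnedAdmissible G F := by
  have hAdm := (mem_pinnedAdmissible.1 hM).1
  have hva : M i v = a := (mem_pinnedAdmissible.1 hM).2 _ List.mem_cons_self
  have hf := (hAdm.1 i).1
  simp only [forbiddenPartners, hva, mem_union, mem_insert, mem_image, mem_univ, true_and,
    mem_filter, not_or, not_exists, not_and] at hx
  obtain ⟨⟨hxv, ⟨hvx, hGvx⟩, hxF⟩, hfar⟩ := hx
  refine mem_pinnedAdmissible.2 ⟨admissibleFor_switchAt hG hAdm hva hxv hvx hGvx (fun j h => ?_)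
    (fun h => hfar _ (Or.inr h) (hf x)), fun t ht => switchAt_apply_of_mem hv hxF hM ht⟩
  exact hfar _ (Or.inl ⟨j, rfl⟩) (by rw [h, hf])

theorem card_pinnedAdmissible_cons_mul_le (hG : ∀ u w, G u w → G w u) {D : ℕ}
    (hD : ∀ u, #(univ.filter (G u)) ≤ D) {F : List (Fin r × α × α)} (i : Fin r) {v : α}
    (a : α) (hv : v ∉ pinnedVerts F) :
    #(pinnedAdmissible G ((i, v, a) :: F)) * (Fintype.card α - (1 + 2 * r + 2 * D + 2 * F.length))
      ≤ #(pinnedAdmissible G F) := by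
  set T := pinnedAdmissible G ((i, v, a) :: F)
  have hT : ∀ M ∈ T, AdmissibleFor G M ∧ M i v = a := fun M hM =>
    ⟨(mem_pinnedAdmissible.1 hM).1, (mem_pinnedAdmissible.1 hM).2 _ List.mem_cons_self⟩
  have hpartner : ∀ {M x}, x ∈ univ \ forbiddenPartners G M i v F → x ≠ v := fun hx h =>
    (mem_sdiff.1 hx).2 (h ▸ mem_union_left _ (mem_insert_self _ _))
  calc #T * (Fintype.card α - (1 + 2 * r + 2 * D + 2 * F.length))
      ≤ ∑ M ∈ T, #(univ \ forbiddenPartners G M i v F) := by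
        rw [← smul_eq_mul, ← sum_const]
        refine sum_le_sum fun M _ => ?_
        rw [card_univ_sdiff]
        exact Nat.sub_le_sub_left (card_forbiddenPartners_le hD M i v F) _
    _ = #(T.sigma fun M => univ \ forbiddenPartners G M i v F) := card_sigma ..|>.symm
    _ ≤ #(pinnedAdmissible G F) := by
        refine card_le_card_of_injOn (fun p => switchAt p.1 i a p.2) (fun p hp => ?_) ?_
        · rw [coe_sigma, Set.mem_sigma_iff] at hp
          exact switchAt_mem_pinnedAdmissible hG hv hp.1 (mem_sdiff.1 hp.2).2
        · rintro ⟨M, x⟩ hp ⟨M', x'⟩ hp' h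
          rw [coe_sigma, Set.mem_sigma_iff] at hp hp'
          obtain ⟨rfl, rfl⟩ := switchAt_injective ((hT M hp.1).1.1 i).2 ((hT M' hp'.1).1.1 i).2
            (hT M hp.1).2 (hT M' hp'.1).2 (hpartner hp.2) (hpartner hp'.2) h
          rfl

theorem filter_matchedInto_subset_biUnion {F : List (Fin r × α × α)} {S Z : Finset α} {v : α}
    (hv : v ∈ S) :
    {M ∈ pinnedAdmissible G F | ∀ u ∈ S, ∃ i, M i u ∈ Z} ⊆ (univ ×ˢ Z).biUnion fun p =>
      {M ∈ pinnedAdmissible G ((p.1, v, p.2) :: F) |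
        ∀ u ∈ (S.erase v).erase p.2, ∃ i, M i u ∈ Z} := by
  intro M hM
  obtain ⟨hMF, hMS⟩ := mem_filter.1 hM
  obtain ⟨hAdm, hpin⟩ := mem_pinnedAdmissible.1 hMF
  obtain ⟨i, hi⟩ := hMS v hv
  refine mem_biUnion.2 ⟨(i, M i v), mem_product.2 ⟨mem_univ _, hi⟩,
    mem_filter.2 ⟨?_, ?_⟩⟩
  · refine mem_pinnedAdmissible.2 ⟨hAdm, fun t ht => ?_⟩
    rcases List.mem_cons.1 ht with rfl | ht
    exacts [rfl, hpin t ht]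
  · exact fun u hu => hMS u (mem_of_mem_erase (mem_of_mem_erase hu))

theorem card_filter_matchedInto_mul_le (hG : ∀ u w, G u w → G w u) {D : ℕ}
    (hD : ∀ u, #(univ.filter (G u)) ≤ D) (Z : Finset α) {L : ℕ} (j : ℕ)
    (F : List (Fin r × α × α)) (S : Finset α) (hSZ : S ⊆ Z) (hS : 2 * j ≤ #S)
    (hL : F.length + j ≤ L) (hSF : Disjoint S (pinnedVerts F)) :
    #{M ∈ pinnedAdmissible G F | ∀ v ∈ S, ∃ i, M i v ∈ Z} *
        (Fintype.card α - (1 + 2 * r + 2 * D + 2 * L)) ^ j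
      ≤ (r * #Z) ^ j * #(pinnedAdmissible G F) := by
  set c := Fintype.card α - (1 + 2 * r + 2 * D + 2 * L)
  induction j generalizing F S with
  | zero => simpa using card_filter_le _ _
  | succ j ih =>
    obtain ⟨v, hvS⟩ : S.Nonempty := card_pos.1 (by omega)
    let piece : Fin r × α → Finset (Fin r → α → α) := fun p =>
      {M ∈ pinnedAdmissible G ((p.1, v, p.2) :: F) |
        ∀ u ∈ (S.erase v).erase p.2, ∃ i, M i u ∈ Z}
    have hrest : ∀ p : Fin r × α, (S.erase v).erase p.2 ⊆ S :=
      fun p => (erase_subset _ _).trans (erase_subset _ _)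
    have hpiece : ∀ p : Fin r × α,
        #(piece p) * c ^ j ≤ (r * #Z) ^ j * #(pinnedAdmissible G ((p.1, v, p.2) :: F)) := by
      intro p
      refine ih _ _ ((hrest p).trans hSZ) ?_ (by simp only [List.length_cons]; omega) ?_
      · have := pred_card_le_card_erase (s := S) (a := v)
        have := pred_card_le_card_erase (s := S.erase v) (a := p.2)
        omega
      · rw [pinnedVerts_cons, disjoint_insert_right, disjoint_insert_right]
        refine ⟨fun h => ?_, fun h => ?_, hSF.mono_left (hrest p)⟩
        · exact (mem_erase.1 (mem_of_mem_erase h)).1 rfl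
        · exact (mem_erase.1 h).1 rfl
    have hstep : ∀ p : Fin r × α,
        #(pinnedAdmissible G ((p.1, v, p.2) :: F)) * c ≤ #(pinnedAdmissible G F) :=
      fun p => (Nat.mul_le_mul_left _ (Nat.sub_le_sub_left (by omega) _)).trans
        (card_pinnedAdmissible_cons_mul_le hG hD p.1 p.2 (disjoint_left.1 hSF hvS))
    calc #{M ∈ pinnedAdmissible G F | ∀ u ∈ S, ∃ i, M i u ∈ Z} * c ^ (j + 1)
        ≤ (∑ p ∈ univ ×ˢ Z, #(piece p)) * c ^ (j + 1) :=
          Nat.mul_le_mul_right _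
            ((card_le_card (filter_matchedInto_subset_biUnion hvS)).trans card_biUnion_le)
      _ = ∑ p ∈ univ ×ˢ Z, #(piece p) * c ^ j * c := by
          rw [sum_mul]; simp only [pow_succ, mul_assoc]
      _ ≤ ∑ p ∈ univ ×ˢ Z,
            (r * #Z) ^ j * (#(pinnedAdmissible G ((p.1, v, p.2) :: F)) * c) := by
          refine sum_le_sum fun p _ => ?_
          rw [← mul_assoc]; exact Nat.mul_le_mul_right _ (hpiece p)
      _ ≤ ∑ p ∈ univ ×ˢ Z, (r * #Z) ^ j * #(pinnedAdmissible G F) :=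
          sum_le_sum fun p _ => Nat.mul_le_mul_left _ (hstep p)
      _ = (r * #Z) ^ (j + 1) * #(pinnedAdmissible G F) := by
          rw [sum_const, card_product, card_univ, Fintype.card_fin, smul_eq_mul]; ring

end Switching

section Torus

open scoped Classical

variable {n k r : ℕ}

theorem Maj.LAdj.symm {u v : Torus n} (h : LAdj n k u v) : LAdj n k v u := by
  obtain ⟨a, b, ha, hb, rfl⟩ := h
  refine ⟨-a, -b, by simpa using ha, by omega, ?_⟩
  ext <;> simp

theorem card_filter_lAdj_le [NeZero n] (u : Torus n) :
    #(univ.filter (LAdj n k u)) ≤ 2 * (2 * k + 1) := by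
  have hsub : univ.filter (LAdj n k u) ⊆ (Icc (-(k : ℤ)) k ×ˢ {1, -1}).image
      fun p : ℤ × ℤ => u + ((p.1 : ZMod n), (p.2 : ZMod n)) := by
    intro w hw
    obtain ⟨a, b, ha, hb, rfl⟩ := (mem_filter.1 hw).2
    refine mem_image.2 ⟨(a, b), ?_, rfl⟩
    simp only [mem_product, mem_Icc, mem_insert, mem_singleton]
    omega
  refine (card_le_card hsub).trans (card_image_le.trans ?_)
  rw [card_product, Int.card_Icc, card_pair (by norm_num)]
  omega

theorem admissible_iff {M : Fin r → Torus n → Torus n} :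
    Admissible n k M ↔ AdmissibleFor (LAdj n k) M :=
  Iff.rfl

theorem admProb_eq_zero {E : (Fin r → Torus n → Torus n) → Prop} (hE : ∀ M, ¬ E M) :
    admProb n k r E = 0 := by
  have : IsEmpty {M // Admissible n k M ∧ E M} := ⟨fun M => hE M M.2.2⟩
  simp [admProb]

theorem admProb_eq [NeZero n] (E : (Fin r → Torus n → Torus n) → Prop) [DecidablePred E] :
    admProb n k r E =
      #{M ∈ pinnedAdmissible (LAdj n k) ([] : List (Fin r × Torus n × Torus n)) | E M} /
        #(pinnedAdmissible (LAdj n k) ([] : List (Fin r × Torus n × Torus n))) := by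
  rw [admProb, Nat.card_eq_fintype_card, Nat.card_eq_fintype_card,
    Fintype.card_of_subtype _ fun M => ?_, Fintype.card_of_subtype _ fun M => ?_] <;>
    simp [mem_pinnedAdmissible, admissible_iff]

end Torus

theorem div_le_pow_of_mul_le {A T m c j : ℕ} (h : A * c ^ j ≤ m ^ j * T) (hc : 0 < c) :
    (A : ℝ) / T ≤ ((m : ℝ) / c) ^ j := by
  rcases T.eq_zero_or_pos with rfl | hT
  · simp only [CharP.cast_eq_zero, div_zero]; positivity
  rw [div_pow, div_le_div_iff₀ (by positivity) (by positivity)]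
  exact_mod_cast h

theorem two_mul_forbidden_bound_le_sq {n k r s z : ℕ} (hr : 1 ≤ r) (hs : 1 ≤ s)
    (h : (z : ℝ) + 2 * (4 * (k : ℝ) + r + 2) ^ 2 * (4 * r * s) ≤ (n : ℝ) ^ 2 / 2) :
    2 * (1 + 2 * r + 2 * (2 * (2 * k + 1)) + 2 * (2 * s)) ≤ n ^ 2 := by
  have hr' : (1 : ℝ) ≤ r := by exact_mod_cast hr
  have hs' : (1 : ℝ) ≤ s := by exact_mod_cast hs
  set Q : ℝ := 4 * k + r + 2
  have hQ : 3 ≤ Q := by linarith [(k.cast_nonneg : (0 : ℝ) ≤ k)]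
  have hQr : 3 ≤ Q * r := by nlinarith
  have hQs : Q + 3 * s ≤ 2 * (Q * s) := by nlinarith
  have hQQrs : 3 * (Q * s) ≤ Q ^ 2 * (r * s) := by
    have := mul_le_mul_of_nonneg_right hQr (by positivity : 0 ≤ Q * s)
    linarith [show Q ^ 2 * (r * s) = Q * r * (Q * s) by ring]
  have : (2 : ℝ) * (1 + 2 * r + 2 * (2 * (2 * k + 1)) + 2 * (2 * s)) ≤ n ^ 2 := by
    linarith [(z.cast_nonneg : (0 : ℝ) ≤ z)]
  exact_mod_cast this

theorem statement_11_general (n k r s : ℕ) (hs : 1 ≤ s)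
    (S Z : Finset (Torus n)) (hSZ : S ⊆ Z) (hScard : S.card = 4 * s)
    (h1 : (Z.card : ℝ) + 2 * (4 * (k : ℝ) + r + 2) ^ 2 * (4 * r * s) ≤ (n : ℝ) ^ 2 / 2) :
    admProb n k r (fun M => ∀ v ∈ S, ∃ i : Fin r, M i v ∈ Z) ≤
      (16 * (r : ℝ) * (Z.card : ℝ) / (n : ℝ) ^ 2) ^ (2 * s) := by
  obtain rfl | hr := Nat.eq_zero_or_pos r
  · obtain ⟨v, hv⟩ : S.Nonempty := card_pos.1 (by omega)
    rw [admProb_eq_zero fun M hM => (hM v hv).elim fun i _ => i.elim0]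
    positivity
  have hroom := two_mul_forbidden_bound_le_sq hr hs h1
  have : NeZero n := ⟨by rintro rfl; simp at hroom⟩
  have hcount := card_filter_matchedInto_mul_le (G := LAdj n k) (fun _ _ => LAdj.symm)
    (card_filter_lAdj_le (k := k)) Z (L := 2 * s) (2 * s) ([] : List (Fin r × _)) S hSZ
    (by omega) (by simp) (by simp [pinnedVerts])
  rw [Fintype.card_prod, ZMod.card, ← sq] at hcount
  set c := n ^ 2 - (1 + 2 * r + 2 * (2 * (2 * k + 1)) + 2 * (2 * s))
  have hc : (n : ℝ) ^ 2 ≤ 2 * c := by exact_mod_cast (by omega : n ^ 2 ≤ 2 * c)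
  have hcpos : (0 : ℝ) < c := Nat.cast_pos.2 (by omega)
  rw [admProb_eq]
  refine (div_le_pow_of_mul_le hcount (by omega)).trans (pow_le_pow_left₀ (by positivity) ?_ _)
  rw [div_le_div_iff₀ hcpos (by have := NeZero.pos n; positivity)]
  push_cast
  nlinarith [(by positivity : (0 : ℝ) ≤ r * #Z)]

/-- Lemma 4.1 of the paper, the switching lemma. For `S ⊆ Z ⊆ [n]²` with
`|S| = 4s`, `|Z| = z`, `z + 2(4k+r+2)²(4rs) ≤ n²/2` and `4erz ≤ n²/2`, the probability that
a uniformly random `k`-admissible `r`-tuple of perfect matchings matches every vertex of `S`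
to a vertex of `Z` is at most `(16rz/n²)^{2s}`. -/
theorem statement_11 (n k r s : ℕ) (hn : Even n) (hs : 1 ≤ s)
    (S Z : Finset (Torus n)) (hSZ : S ⊆ Z) (hScard : S.card = 4 * s)
    (h1 : (Z.card : ℝ) + 2 * (4 * (k : ℝ) + r + 2) ^ 2 * (4 * r * s) ≤ (n : ℝ) ^ 2 / 2)
    (h2 : 4 * Real.exp 1 * r * (Z.card : ℝ) ≤ (n : ℝ) ^ 2 / 2) :
    admProb n k r (fun M => ∀ v ∈ S, ∃ i : Fin r, M i v ∈ Z) ≤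
      (16 * (r : ℝ) * (Z.card : ℝ) / (n : ℝ) ^ 2) ^ (2 * s) :=
  statement_11_general n k r s hs S Z hSZ hScard h1
end

section
/- Fix an integer m ≥ 2 and a constant p ∈ [0,1). Consider the strict majority bootstrap percolation process M₁([n]^m; p) on the m-dimensional grid graph [n]^m, where each vertex is initially active with probability p independently. Then, with probability tending to 1 as n → ∞, the process does not disseminate. In particular, the critical probability for dissemination of M₁([n]^m; p) equals 1. (The key deterministic fact is: if all 2^m vertices of a translate of the cube {1,2}^m inside [n]^m are initially inactive, then they all remain inactive in the final state.) -/
open Finset Filter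

open Maj

/-! An initially inactive cube `{c, c+1}^m` is never activated: each of its vertices has at most
`2m` neighbours, `m` of which lie in the cube, so it can never see the strict majority
`⌈(deg + 1)/2⌉` of active neighbours it needs. The grid `[n]^m` contains `⌊(n-1)/2⌋` disjoint
such cubes along its diagonal, each entirely inactive with probability `(1-p)^(2^m)`,
independently; so with probability at least `1 - (1 - (1-p)^(2^m))^⌊(n-1)/2⌋ → 1` one of them
is, and the process does not disseminate. -/

namespace Maj

section Majority

variable {V : Type*} [Finite V] {Adj : V → V → Prop} {r : ℤ} {A C : Set V}

theorem disjoint_iterate_majStep (hAC : Disjoint A C)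
    (hC : ∀ v ∈ C, ((nbrSet Adj v).ncard : ℤ) < 2 * (nbrSet Adj v ∩ C).ncard + r) (s : ℕ) :
    Disjoint ((majStep Adj r)^[s] A) C := by
  induction s with
  | zero => exact hAC
  | succ s ih =>
    rw [Function.iterate_succ_apply']
    refine Set.disjoint_union_left.mpr ⟨ih, Set.disjoint_right.mpr fun v hv hact => ?_⟩
    set B := (majStep Adj r)^[s] A
    have hsplit : (nbrSet Adj v ∩ B).ncard + (nbrSet Adj v ∩ C).ncard ≤ (nbrSet Adj v).ncard := by
      rw [← Set.ncard_union_eq (ih.mono Set.inter_subset_right Set.inter_subset_right)]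
      exact Set.ncard_le_ncard (Set.union_subset Set.inter_subset_left Set.inter_subset_left)
    have hvC := hC v hv
    simp only [Set.mem_ofPred_eq] at hact
    omega

theorem disjoint_majFinal (hAC : Disjoint A C)
    (hC : ∀ v ∈ C, ((nbrSet Adj v).ncard : ℤ) < 2 * (nbrSet Adj v ∩ C).ncard + r) :
    Disjoint (majFinal Adj r A) C :=
  Set.disjoint_iUnion_left.mpr (disjoint_iterate_majStep hAC hC)

end Majority

section Grid

variable {n m : ℕ}

def cube (n : ℕ) (c : Fin m → ℕ) : Finset (Fin m → Fin n) :=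
  univ.filter fun v => ∀ i, (v i : ℕ) = c i ∨ (v i : ℕ) = c i + 1

theorem card_cube_le (c : Fin m → ℕ) : (cube n c).card ≤ 2 ^ m := by
  calc (cube n c).card ≤ (univ : Finset (Fin m → Bool)).card := by
        refine card_le_card_of_injOn (fun v i => decide ((v i : ℕ) = c i + 1))
          (fun _ _ => mem_univ _) fun v hv w hw hvw => funext fun i => Fin.ext ?_
        simp only [cube, coe_filter, mem_univ, true_and, Set.mem_ofPred_eq] at hv hw
        have hi := congrFun hvw i
        simp only [decide_eq_decide] at hi
        rcases hv i with h | h <;> rcases hw i with h' | h' <;> omega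
    _ = 2 ^ m := by simp

theorem ncard_nbrSet_gridAdj_le (v : Fin m → Fin n) :
    (nbrSet (gridAdj n m) v).ncard ≤ 2 * m := by
  let coords : (Fin m → Fin n) → Fin m → ℕ := fun u j => u j
  let step : Fin m × Bool → Fin m → ℕ := fun ib =>
    Function.update (coords v) ib.1 (if ib.2 then v ib.1 + 1 else v ib.1 - 1)
  have hcoords : Function.Injective coords := fun u w h => funext fun j => Fin.ext (congrFun h j)
  have hsub : coords '' nbrSet (gridAdj n m) v ⊆ step '' Set.univ := by
    rintro _ ⟨u, ⟨i, hi, hj⟩, rfl⟩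
    refine ⟨(i, decide ((v i : ℕ) < u i)), Set.mem_univ _, funext fun j => ?_⟩
    rcases eq_or_ne j i with rfl | hji
    · simp only [step, Function.update_self, coords]
      split_ifs with h <;> simp at h <;> omega
    · simp [step, coords, Function.update_of_ne hji, hj j hji]
  calc (nbrSet (gridAdj n m) v).ncard = (coords '' nbrSet (gridAdj n m) v).ncard :=
        (Set.ncard_image_of_injective _ hcoords).symm
    _ ≤ (step '' Set.univ).ncard := Set.ncard_le_ncard hsub
    _ ≤ (Set.univ : Set (Fin m × Bool)).ncard := Set.ncard_image_le
    _ = 2 * m := by simp [mul_comm]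

theorem le_ncard_nbrSet_inter_cube {c : Fin m → ℕ} (hc : ∀ i, c i + 1 < n)
    {v : Fin m → Fin n} (hv : v ∈ cube n c) :
    m ≤ (nbrSet (gridAdj n m) v ∩ ↑(cube n c)).ncard := by
  simp only [cube, mem_filter, mem_univ, true_and] at hv
  -- `flip i` moves `v` to the other end of the cube's edge in direction `i`.
  let flip : Fin m → Fin m → Fin n := fun i =>
    Function.update v i ⟨2 * c i + 1 - v i, by have := hc i; rcases hv i with h | h <;> omega⟩
  have hflip_ne (i : Fin m) : (flip i i : ℕ) ≠ v i := by
    simp only [flip, Function.update_self]; rcases hv i with h | h <;> omega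
  have hflip_of_ne {i j : Fin m} (h : j ≠ i) : flip i j = v j := Function.update_of_ne h _ _
  calc m = (Set.univ : Set (Fin m)).ncard := by simp
    _ ≤ _ := by
      refine Set.ncard_le_ncard_of_injOn flip
        (fun i _ => ⟨⟨i, ?_, fun j h => (hflip_of_ne h).symm⟩, ?_⟩)
        (fun i _ j _ hij => by_contra fun hne => hflip_ne j ?_)
      · have := hflip_ne i
        simp only [flip, Function.update_self] at this ⊢
        rcases hv i with h | h <;> omega
      · simp only [cube, coe_filter, mem_univ, true_and, Set.mem_ofPred_eq]
        intro j
        rcases eq_or_ne j i with rfl | hji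
        · simp only [flip, Function.update_self]; rcases hv j with h | h <;> omega
        · rw [hflip_of_ne hji]; exact hv j
      · rw [← hij, hflip_of_ne (Ne.symm hne)]

theorem disjoint_majFinal_cube (A : Set (Fin m → Fin n)) {c : Fin m → ℕ}
    (hc : ∀ i, c i + 1 < n) (hA : Disjoint A ↑(cube n c)) :
    Disjoint (majFinal (gridAdj n m) 1 A) ↑(cube n c) :=
  disjoint_majFinal hA fun v hv => by
    have hdeg := ncard_nbrSet_gridAdj_le v
    have hcube := le_ncard_nbrSet_inter_cube hc hv
    omega

end Grid

section InitProb

variable {V : Type*} [Fintype V] (p : ℝ)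

theorem initProb_disjoint [DecidableEq V] (S : Finset V) :
    initProb V p (fun A => Disjoint A ↑S) = (1 - p) ^ S.card := by
  have hfilter : univ.filter (fun A : Finset V => Disjoint A S) = Sᶜ.powerset := by
    ext A; simp [subset_compl_iff_disjoint_right]
  have hcard : Fintype.card V = Sᶜ.card + S.card := by
    rw [card_compl]; have := S.card_le_univ; omega
  unfold initProb
  simp only [disjoint_coe]
  rw [← sum_filter, hfilter]
  calc ∑ A ∈ Sᶜ.powerset, p ^ A.card * (1 - p) ^ (Fintype.card V - A.card)
      = ∑ A ∈ Sᶜ.powerset, (1 - p) ^ S.card * (p ^ A.card * (1 - p) ^ (Sᶜ.card - A.card)) :=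
        sum_congr rfl fun A hA => by
          have := card_le_card (mem_powerset.mp hA)
          rw [show Fintype.card V - A.card = Sᶜ.card - A.card + S.card by omega, pow_add]
          ring
    _ = (1 - p) ^ S.card := by rw [← mul_sum, sum_pow_mul_eq_add_pow]; simp

theorem initProb_true : initProb V p (fun _ => True) = 1 := by
  classical
  simpa using initProb_disjoint p (∅ : Finset V)

theorem initProb_not (E : Set V → Prop) :
    initProb V p (fun A => ¬ E A) = 1 - initProb V p E := by
  rw [eq_sub_iff_add_eq, ← initProb_true (V := V) p]
  unfold initProb
  rw [← sum_add_distrib]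
  refine sum_congr rfl fun A _ => ?_
  by_cases h : E ↑A <;> simp [h]

/-- Inclusion–exclusion over the set `U ⊆ T` of blocks that are avoided: avoiding the blocks
of `U` is avoiding their union, which has probability `∏ t ∈ U, (1 - p) ^ #(S t)`. -/
theorem initProb_forall_not_disjoint [DecidableEq V] {ι : Type*} [DecidableEq ι] (T : Finset ι)
    (S : ι → Finset V) (hS : (T : Set ι).PairwiseDisjoint S) :
    initProb V p (fun A => ∀ t ∈ T, ¬ Disjoint A ↑(S t)) = ∏ t ∈ T, (1 - (1 - p) ^ (S t).card) := by
  have hind (A : Finset V) : (if ∀ t ∈ T, ¬ Disjoint A (S t) then (1 : ℝ) else 0) =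
      ∑ U ∈ T.powerset, (-1) ^ U.card * if Disjoint A (U.biUnion S) then 1 else 0 := by
    rw [← prod_boole]
    calc ∏ t ∈ T, (if ¬ Disjoint A (S t) then (1 : ℝ) else 0)
        = ∏ t ∈ T, (-(if Disjoint A (S t) then (1 : ℝ) else 0) + 1) :=
          prod_congr rfl fun t _ => by split_ifs <;> simp
      _ = _ := by
          rw [prod_add]
          refine sum_congr rfl fun U _ => ?_
          simp only [prod_const_one, mul_one, prod_neg, prod_boole, disjoint_biUnion_right]
  calc initProb V p (fun A => ∀ t ∈ T, ¬ Disjoint A ↑(S t))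
      = ∑ A : Finset V, ∑ U ∈ T.powerset, (-1) ^ U.card *
          ((if Disjoint A (U.biUnion S) then 1 else 0) *
            (p ^ A.card * (1 - p) ^ (Fintype.card V - A.card))) := by
        unfold initProb
        refine sum_congr rfl fun A _ => ?_
        simp only [disjoint_coe]
        rw [← boole_mul, hind, sum_mul]
        simp only [mul_assoc]
    _ = ∑ U ∈ T.powerset, (-1) ^ U.card * initProb V p (fun A => Disjoint A ↑(U.biUnion S)) := by
        rw [sum_comm]
        refine sum_congr rfl fun U _ => ?_
        unfold initProb
        simp only [disjoint_coe, mul_sum, ite_mul, one_mul, zero_mul]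
    _ = ∑ U ∈ T.powerset, ∏ t ∈ U, -(1 - p) ^ (S t).card := by
        refine sum_congr rfl fun U hU => ?_
        rw [initProb_disjoint, card_biUnion (hS.subset (mem_powerset.mp hU)),
          ← prod_pow_eq_pow_sum, prod_neg]
    _ = ∏ t ∈ T, (-(1 - p) ^ (S t).card + 1) := by simp only [prod_add, prod_const_one, mul_one]
    _ = ∏ t ∈ T, (1 - (1 - p) ^ (S t).card) := by simp only [neg_add_eq_sub]

variable {p}

theorem initProb_mono (hp0 : 0 ≤ p) (hp1 : p ≤ 1) {E F : Set V → Prop} (h : ∀ A, E A → F A) :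
    initProb V p E ≤ initProb V p F := by
  unfold initProb
  refine sum_le_sum fun A _ => ?_
  have hw : 0 ≤ p ^ A.card * (1 - p) ^ (Fintype.card V - A.card) :=
    mul_nonneg (pow_nonneg hp0 _) (pow_nonneg (sub_nonneg.mpr hp1) _)
  by_cases hE : E ↑A
  · simp [hE, h _ hE]
  · simp only [hE, if_false]; split_ifs <;> linarith

theorem initProb_le_one (hp0 : 0 ≤ p) (hp1 : p ≤ 1) (E : Set V → Prop) : initProb V p E ≤ 1 :=
  (initProb_mono hp0 hp1 fun _ _ => trivial).trans_eq (initProb_true p)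

end InitProb

theorem one_sub_pow_le_initProb_majFinal_ne_univ {m : ℕ} (hm : 0 < m) {p : ℝ} (hp0 : 0 ≤ p)
    (hp1 : p ≤ 1) (n : ℕ) :
    1 - (1 - (1 - p) ^ 2 ^ m) ^ ((n - 1) / 2) ≤
      initProb (Fin m → Fin n) p (fun A => majFinal (gridAdj n m) 1 A ≠ Set.univ) := by
  set K := (n - 1) / 2
  let S : ℕ → Finset (Fin m → Fin n) := fun t => cube n fun _ => 2 * t
  have hS : ((range K : Finset ℕ) : Set ℕ).PairwiseDisjoint S := by
    intro s _ t _ hst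
    refine disjoint_left.mpr fun v hs ht => hst ?_
    simp only [S, cube, mem_filter, mem_univ, true_and] at hs ht
    have := hs ⟨0, hm⟩
    have := ht ⟨0, hm⟩
    omega
  have hblock (t : ℕ) (ht : t ∈ range K) (A : Set (Fin m → Fin n)) (hA : Disjoint A ↑(S t)) :
      majFinal (gridAdj n m) 1 A ≠ Set.univ := by
    rw [mem_range] at ht
    have hv : (fun _ => ⟨2 * t, by omega⟩ : Fin m → Fin n) ∈ S t := by simp [S, cube]
    intro huniv
    have hfin := disjoint_majFinal_cube A (fun _ => by omega) hA
    rw [huniv] at hfin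
    exact Set.disjoint_left.mp hfin (Set.mem_univ _) (mem_coe.mpr hv)
  calc 1 - (1 - (1 - p) ^ 2 ^ m) ^ K = 1 - ∏ t ∈ range K, (1 - (1 - p) ^ 2 ^ m) := by
        rw [prod_const, card_range]
    _ ≤ 1 - ∏ t ∈ range K, (1 - (1 - p) ^ (S t).card) := by
        refine sub_le_sub_left (prod_le_prod (fun t _ => ?_) fun t _ => ?_) 1
        · exact sub_nonneg.mpr (pow_le_one₀ (by linarith) (by linarith))
        · exact sub_le_sub_left
            (pow_le_pow_of_le_one (by linarith) (by linarith) (card_cube_le _)) 1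
    _ = initProb _ p (fun A => ¬ ∀ t ∈ range K, ¬ Disjoint A ↑(S t)) := by
        rw [initProb_not, initProb_forall_not_disjoint _ _ _ hS]
    _ ≤ _ := initProb_mono hp0 hp1 fun A hA => by
        push Not at hA
        obtain ⟨t, ht, hAt⟩ := hA
        exact hblock t ht A hAt

end Maj

/-- For every fixed `m ≥ 2` and `p ∈ [0,1)`, the strict majority bootstrap
percolation process `M₁([n]^m; p)` a.a.s. does not disseminate, so its critical probability
is `1`. The key deterministic fact: an initially fully inactive translate of the cube
`{1,2}^m` stays inactive forever. -/
theorem statement_16 (m : ℕ) (hm : 2 ≤ m) (p : ℝ) (hp0 : 0 ≤ p) (hp1 : p < 1) :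
    Tendsto (fun n => initProb (Fin m → Fin n) p
        (fun A => majFinal (gridAdj n m) 1 A ≠ Set.univ)) atTop (nhds 1) ∧
    ∀ (n : ℕ) (A : Set (Fin m → Fin n)) (c : Fin m → ℕ),
      (∀ i, c i + 1 < n) →
      (∀ v : Fin m → Fin n, (∀ i, (v i : ℕ) = c i ∨ (v i : ℕ) = c i + 1) → v ∉ A) →
      ∀ v : Fin m → Fin n, (∀ i, (v i : ℕ) = c i ∨ (v i : ℕ) = c i + 1) →
        v ∉ majFinal (gridAdj n m) 1 A := by
  refine ⟨?_, fun n A c hc hA v hv hvA => ?_⟩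
  · have hq0 : 0 ≤ 1 - (1 - p) ^ 2 ^ m := sub_nonneg.mpr (pow_le_one₀ (by linarith) (by linarith))
    have hq1 : 1 - (1 - p) ^ 2 ^ m < 1 := sub_lt_self _ (pow_pos (by linarith) _)
    have hK : Tendsto (fun n : ℕ => (n - 1) / 2) atTop atTop :=
      tendsto_atTop_atTop.mpr fun b => ⟨2 * b + 1, fun n hn => by omega⟩
    have hlower :
        Tendsto (fun n : ℕ => 1 - (1 - (1 - p) ^ 2 ^ m) ^ ((n - 1) / 2)) atTop (nhds 1) := by
      simpa using tendsto_const_nhds.sub ((tendsto_pow_atTop_nhds_zero_of_lt_one hq0 hq1).comp hK)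
    exact tendsto_of_tendsto_of_tendsto_of_le_of_le hlower tendsto_const_nhds
      (one_sub_pow_le_initProb_majFinal_ne_univ (by omega) hp0 hp1.le)
      fun n => initProb_le_one hp0 hp1.le _
  · have hAc : Disjoint A ↑(cube n c) :=
      Set.disjoint_right.mpr fun w hw => hA w (by simpa [cube] using hw)
    exact Set.disjoint_left.mp (disjoint_majFinal_cube A hc hAc) hvA (by simpa [cube] using hv)
end
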